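/- arXiv:1711.10751 — 2 statements merged into one kernel-verified Lean document; each statement's English description precedes it below -/
import Mathlib

section
/- Full correctness of the Transfer-phase decryption (equation (4) of the paper): let w, s, β, γ, α, v ∈ ZMod p with β and α invertible, let s_1, …, s_n, a_1, …, a_n, λ_1, …, λ_n ∈ ZMod p, set r = s_1 + … + s_n, B = g1^β, h = g2^γ, Y = e(g1, g2^w), H = e(B, h), and let m ∈ GT. Define the ciphertext components c2 = B^r, c3 = m · Y^r · e(c2, h), c4_ℓ = g1^{s_ℓ}, c5_ℓ = (g1^{a_ℓ})^{α·s_ℓ}; the key components d0 = g2^{(w+s)·β⁻¹}, d1_ℓ = g2^s · (g2^{a_ℓ})^{λ_ℓ}, d3_ℓ = g2^{λ_ℓ·α⁻¹}; and the response Res = e(c2 · B^v, h). Then c3 · (∏_{ℓ=1}^n e(c4_ℓ, d1_ℓ)) · H^v · (e(c2, d0) · (∏_{ℓ=1}^n e(c5_ℓ, d3_ℓ)) · Res)⁻¹ = m. -/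
def gpow {p : ℕ} {G : Type*} [Monoid G] (x : G) (a : ZMod p) : G := x ^ a.val

lemma pow_val_mod {p : ℕ} {G : Type*} [Monoid G] (x : G) (hx : x ^ p = 1) (k : ℕ) :
    x ^ (k % p) = x ^ k := by
  conv_rhs => rw [← Nat.mod_add_div k p]
  rw [pow_add, pow_mul, hx, one_pow, mul_one]

lemma gpow_add {p : ℕ} [NeZero p] {G : Type*} [Monoid G] (x : G) (hx : x ^ p = 1)
    (a b : ZMod p) : gpow x (a + b) = gpow x a * gpow x b := by
  unfold gpow
  rw [ZMod.val_add, pow_val_mod x hx, pow_add]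

lemma gpow_gpow {p : ℕ} [NeZero p] {G : Type*} [Monoid G] (x : G) (hx : x ^ p = 1)
    (a b : ZMod p) : gpow (gpow x a) b = gpow x (a * b) := by
  unfold gpow
  rw [ZMod.val_mul, pow_val_mod x hx, pow_mul]

lemma gpow_one' {p : ℕ} [Fact (1 < p)] {G : Type*} [Monoid G] (x : G) :
    gpow x (1 : ZMod p) = x := by
  unfold gpow; rw [ZMod.val_one p, pow_one]

lemma gpow_sum {p : ℕ} [NeZero p] {G : Type*} [CommMonoid G] (x : G) (hx : x ^ p = 1)
    {ι : Type*} (t : Finset ι) (f : ι → ZMod p) :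
    gpow x (∑ i ∈ t, f i) = ∏ i ∈ t, gpow x (f i) := by
  classical
  induction t using Finset.cons_induction with
  | empty => simp [gpow]
  | cons i t hi ih => rw [Finset.sum_cons, Finset.prod_cons, gpow_add x hx, ih]

theorem stmt_6 {p : ℕ} [Fact p.Prime]
    {G1 G2 GT : Type*} [CommGroup G1] [CommGroup G2] [CommGroup GT]
    (g1 : G1) (g2 : G2) (e : G1 → G2 → GT)
    (htor1 : ∀ x : G1, x ^ p = 1) (htor2 : ∀ y : G2, y ^ p = 1)
    (htorT : ∀ z : GT, z ^ p = 1)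
    (ebil1 : ∀ (x x' : G1) (y : G2), e (x * x') y = e x y * e x' y)
    (ebil2 : ∀ (x : G1) (y y' : G2), e x (y * y') = e x y * e x y')
    (epow : ∀ a b : ZMod p, e (gpow g1 a) (gpow g2 b) = gpow (e g1 g2) (a * b))
    (n : ℕ) (w s0 β γ α v : ZMod p) (hβ : IsUnit β) (hα : IsUnit α)
    (s a lam : Fin n → ZMod p) (r : ZMod p) (hr : r = ∑ ℓ, s ℓ)
    (B : G1) (hB : B = gpow g1 β)
    (h : G2) (hh : h = gpow g2 γ)
    (Y : GT) (hY : Y = e g1 (gpow g2 w))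
    (H : GT) (hH : H = e B h)
    (m : GT)
    (c2 : G1) (hc2 : c2 = gpow B r)
    (c3 : GT) (hc3 : c3 = m * gpow Y r * e c2 h)
    (c4 : Fin n → G1) (hc4 : ∀ ℓ, c4 ℓ = gpow g1 (s ℓ))
    (c5 : Fin n → G1) (hc5 : ∀ ℓ, c5 ℓ = gpow (gpow g1 (a ℓ)) (α * s ℓ))
    (d0 : G2) (hd0 : d0 = gpow g2 ((w + s0) * β⁻¹))
    (d1 : Fin n → G2) (hd1 : ∀ ℓ, d1 ℓ = gpow g2 s0 * gpow (gpow g2 (a ℓ)) (lam ℓ))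
    (d3 : Fin n → G2) (hd3 : ∀ ℓ, d3 ℓ = gpow g2 (lam ℓ * α⁻¹))
    (Res : GT) (hRes : Res = e (c2 * gpow B v) h) :
    c3 * (∏ ℓ, e (c4 ℓ) (d1 ℓ)) * gpow H v *
      (e c2 d0 * (∏ ℓ, e (c5 ℓ) (d3 ℓ)) * Res)⁻¹ = m := by
  haveI : NeZero p := ⟨(Fact.out : p.Prime).ne_zero⟩
  haveI : Fact (1 < p) := ⟨(Fact.out : p.Prime).one_lt⟩
  set T := e g1 g2 with hT
  have hTtor := htorT T
  have h1tor := htor1 g1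
  have h2tor := htor2 g2
  have hβ0 : β ≠ 0 := hβ.ne_zero
  have hα0 : α ≠ 0 := hα.ne_zero
  -- rewrite all components in canonical form
  have hc2' : c2 = gpow g1 (β * r) := by rw [hc2, hB, gpow_gpow g1 h1tor]
  have hY' : Y = gpow T w := by
    rw [hY, ← gpow_one' (p := p) g1, epow, one_mul]
  have hc2h : e c2 h = gpow T (β * r * γ) := by rw [hc2', hh, epow]
  have hc3' : c3 = m * gpow T (w * r) * gpow T (β * r * γ) := by
    rw [hc3, hY', gpow_gpow T hTtor, hc2h]
  have hpair1 : ∀ ℓ, e (c4 ℓ) (d1 ℓ) = gpow T (s ℓ * (s0 + a ℓ * lam ℓ)) := by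
    intro ℓ
    rw [hc4, hd1, gpow_gpow g2 h2tor, ← gpow_add g2 h2tor, epow]
  have hHv : gpow H v = gpow T (β * γ * v) := by
    rw [hH, hB, hh, epow, gpow_gpow T hTtor]
  have hed0 : e c2 d0 = gpow T (r * (w + s0)) := by
    rw [hc2', hd0, epow]
    congr 1
    field_simp
  have hpair2 : ∀ ℓ, e (c5 ℓ) (d3 ℓ) = gpow T (a ℓ * s ℓ * lam ℓ) := by
    intro ℓ
    rw [hc5, hd3, gpow_gpow g1 h1tor, epow]
    congr 1
    field_simp
  have hRes' : Res = gpow T ((β * r + β * v) * γ) := by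
    rw [hRes, hc2', hB, gpow_gpow g1 h1tor, ← gpow_add g1 h1tor, hh, epow]
  rw [hc3', hHv, hed0, hRes']
  rw [Finset.prod_congr rfl (fun ℓ _ => hpair1 ℓ),
      Finset.prod_congr rfl (fun ℓ _ => hpair2 ℓ),
      ← gpow_sum T hTtor, ← gpow_sum T hTtor]
  rw [← gpow_add T hTtor, ← gpow_add T hTtor]
  have key : r * (w + s0) + (∑ ℓ, a ℓ * s ℓ * lam ℓ) + (β * r + β * v) * γ
      = w * r + (β * r * γ + ((∑ ℓ, s ℓ * (s0 + a ℓ * lam ℓ)) + β * γ * v)) := by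
    have hS : (∑ ℓ, s ℓ * (s0 + a ℓ * lam ℓ))
        = r * s0 + ∑ ℓ, a ℓ * s ℓ * lam ℓ := by
      rw [hr, Finset.sum_mul, ← Finset.sum_add_distrib]
      apply Finset.sum_congr rfl
      intro ℓ _
      ring
    rw [hS]
    ring
  rw [mul_inv_eq_iff_eq_mul, key, gpow_add T hTtor, gpow_add T hTtor, gpow_add T hTtor]
  simp only [mul_assoc]
end

section
/- Equivocation of commitments under the witness-indistinguishability CRS (trapdoor opening): let a, b, ξ1, ξ2 ∈ ZMod p, and in the componentwise group G1³ set u1 = (g1^a, 1, g1), u2 = (1, g1^b, g1), u3 = u1^{ξ1} · u2^{ξ2} · (1, 1, g1), and μ1(x) = (1, 1, x) for x ∈ G1. Then for every x ∈ G1 and all r1, r2, r3 ∈ ZMod p, μ1(x) · u1^{r1} · u2^{r2} · u3^{r3} = μ1(x · g1^{r3}) · u1^{r1 + ξ1·r3} · u2^{r2 + ξ2·r3}; that is, a commitment to x also opens as a commitment to x · g1^{r3}. -/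
/-- Componentwise exponentiation on triples by an element of `ZMod p`. -/
def gpow3 {p : ℕ} {G : Type*} [Monoid G] (x : G × G × G) (a : ZMod p) : G × G × G :=
  (gpow x.1 a, gpow x.2.1 a, gpow x.2.2 a)

theorem stmt_10 {p : ℕ} [Fact p.Prime]
    {G1 : Type*} [CommGroup G1]
    (g1 : G1) (htor : ∀ x : G1, x ^ p = 1)
    (a b ξ1 ξ2 : ZMod p)
    (u1 : G1 × G1 × G1) (hu1 : u1 = (gpow g1 a, 1, g1))
    (u2 : G1 × G1 × G1) (hu2 : u2 = (1, gpow g1 b, g1))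
    (u3 : G1 × G1 × G1) (hu3 : u3 = gpow3 u1 ξ1 * gpow3 u2 ξ2 * (1, 1, g1))
    (μ1 : G1 → G1 × G1 × G1) (hμ1 : ∀ x : G1, μ1 x = (1, 1, x)) :
    ∀ (x : G1) (r1 r2 r3 : ZMod p),
      μ1 x * gpow3 u1 r1 * gpow3 u2 r2 * gpow3 u3 r3 =
      μ1 (x * gpow g1 r3) * gpow3 u1 (r1 + ξ1 * r3) * gpow3 u2 (r2 + ξ2 * r3) := by
  intro x r1 r2 r3
  haveI : NeZero p := ⟨(Fact.out : p.Prime).ne_zero⟩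
  have hmod : ∀ (y : G1) (n : ℕ), y ^ (n % p) = y ^ n := by
    intro y n
    conv_rhs => rw [← Nat.div_add_mod n p]
    rw [pow_add, pow_mul, htor, one_pow, one_mul]
  have hadd : ∀ (y : G1) (s t : ZMod p), gpow y (s + t) = gpow y s * gpow y t := by
    intro y s t
    rw [gpow, ZMod.val_add, hmod, pow_add]; rfl
  have hmul : ∀ (y : G1) (s t : ZMod p), gpow (gpow y s) t = gpow y (s * t) := by
    intro y s t
    rw [gpow, gpow, gpow, ← pow_mul, ZMod.val_mul, hmod]
  have hone : ∀ (s : ZMod p), gpow (1 : G1) s = 1 := fun s => one_pow _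
  have hbase : ∀ (y z : G1) (s : ZMod p), gpow (y * z) s = gpow y s * gpow z s :=
    fun y z s => mul_pow y z _
  subst hu1 hu2 hu3
  refine Prod.ext ?_ (Prod.ext ?_ ?_) <;>
    simp [hμ1, gpow3, hone, hbase, hmul, hadd, mul_add, add_mul, mul_assoc, mul_comm,
      mul_left_comm]
end
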